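/- Let G be a finite simple graph on vertex set V, and let v be a vertex whose neighborhood is exactly {u, w} with u ≠ w and u not adjacent to w in G. Let G' be the simple graph on V whose edges are the edges of G not incident to v, together with the new edge {u, w}. Then the minimum cardinality of a feedback vertex set of G' equals the minimum cardinality of a feedback vertex set of G. -/

import Mathlib

open SimpleGraph Walk
namespace FVSsup
variable {V : Type*}

def liftWalk {G : SimpleGraph V} {s : Set V} :
    ∀ {a b : V} (p : G.Walk a b) (hs : ∀ x ∈ p.support, x ∈ s),
      (G.induce s).Walk ⟨a, hs a p.start_mem_support⟩ ⟨b, hs b p.end_mem_support⟩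
  | _, _, Walk.nil, _hs => Walk.nil
  | _, _, Walk.cons h p, hs =>
      Walk.cons (by exact h) (liftWalk p fun x hx => hs x (by simp [Walk.support_cons, hx]))

lemma liftWalk_map {G : SimpleGraph V} {s : Set V} :
    ∀ {a b : V} (p : G.Walk a b) (hs : ∀ x ∈ p.support, x ∈ s),
      (liftWalk p hs).map (SimpleGraph.Embedding.induce s).toHom = p
  | _, _, Walk.nil, _hs => rfl
  | _, _, Walk.cons h p, hs => by
      simp only [liftWalk, Walk.map_cons]
      congr 1
      exact congrArg (Walk.cons h) (liftWalk_map p _)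

lemma induce_isAcyclic_iff {G : SimpleGraph V} {s : Set V} :
    (G.induce s).IsAcyclic ↔ ∀ (a : V) (c : G.Walk a a), c.IsCycle → ∃ x ∈ c.support, x ∉ s := by
  constructor
  · intro h a c hc
    by_contra hx
    push_neg at hx
    have hmap := liftWalk_map c hx
    rw [← hmap] at hc
    exact h _ ((Walk.map_isCycle_iff_of_injective
      (SimpleGraph.Embedding.induce (G := G) s).injective).mp hc)
  · intro h r c hc
    have hcm : (c.map (SimpleGraph.Embedding.induce s).toHom).IsCycle :=
      hc.map (SimpleGraph.Embedding.induce (G := G) s).injective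
    obtain ⟨x, hxs, hxns⟩ := h _ _ hcm
    rw [Walk.support_map, List.mem_map] at hxs
    obtain ⟨y, _, rfl⟩ := hxs
    exact hxns y.2

lemma mem_support_start_or_edge {G : SimpleGraph V} {a b x : V} (p : G.Walk a b)
    (hx : x ∈ p.support) : x = a ∨ ∃ e ∈ p.edges, x ∈ e := by
  induction p with
  | nil => simp at hx; exact Or.inl hx
  | @cons a' c' b' h p ih =>
    rw [Walk.support_cons, List.mem_cons] at hx
    rcases hx with h1 | h2
    · exact Or.inl h1
    · rcases ih h2 with h3 | ⟨e, he, hxe⟩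
      · subst h3
        exact Or.inr ⟨s(a', x), by simp [Walk.edges_cons], by simp⟩
      · exact Or.inr ⟨e, by simp [Walk.edges_cons, he], hxe⟩

lemma mem_support_of_mem_edges' {G : SimpleGraph V} {a b x : V} {e : Sym2 V} (p : G.Walk a b)
    (he : e ∈ p.edges) (hx : x ∈ e) : x ∈ p.support := by
  induction e using Sym2.ind with
  | _ y z =>
    rcases Sym2.mem_iff.mp hx with rfl | rfl
    · exact p.fst_mem_support_of_mem_edges he
    · exact p.snd_mem_support_of_mem_edges he

lemma not_mem_cycle_support_of_isolated {G : SimpleGraph V} {r y : V} {c : G.Walk r r}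
    (hc : c.IsCycle) (hy : ∀ z, ¬ G.Adj y z) : y ∉ c.support := by
  intro h
  rcases mem_support_start_or_edge c h with h1 | ⟨e, he, hye⟩
  · subst h1
    cases c with
    | nil => exact hc.ne_nil rfl
    | cons hadj p => exact hy _ hadj
  · induction e using Sym2.ind with
    | _ z₁ z₂ =>
      have hadj := c.adj_of_mem_edges he
      rcases Sym2.mem_iff.mp hye with rfl | rfl
      · exact hy _ hadj
      · exact hy _ hadj.symm

lemma mem_support_rotate [DecidableEq V] {G : SimpleGraph V} {r x y : V} {c : G.Walk r r} (hx : x ∈ c.support)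
    (hy : y ∈ (c.rotate x hx).support) : y ∈ c.support := by
  rw [Walk.support_eq_cons] at hy
  rcases List.mem_cons.mp hy with rfl | hy'
  · exact hx
  · have := (Walk.support_rotate c x hx).mem_iff.mp hy'
    rw [Walk.support_eq_cons]
    exact List.mem_cons_of_mem _ this

lemma cycle_cons_decomp {G : SimpleGraph V} {a : V} (c : G.Walk a a) (hc : c.IsCycle) :
    ∃ (x : V) (h : G.Adj a x) (q : G.Walk x a),
      c = Walk.cons h q ∧ q.IsPath ∧ s(a, x) ∉ q.edges := by
  cases c with
  | nil => exact absurd rfl hc.ne_nil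
  | cons h q =>
    obtain ⟨hq, he⟩ := (Walk.cons_isCycle_iff q h).mp hc
    exact ⟨_, h, q, rfl, hq, he⟩

lemma walk_concat_decomp {G : SimpleGraph V} {a b : V} (q : G.Walk a b) (hne : a ≠ b) :
    ∃ (z : V) (q' : G.Walk a z) (h' : G.Adj z b), q = q'.concat h' := by
  cases q with
  | nil => exact absurd rfl hne
  | cons h₂ q₂ => exact Walk.exists_cons_eq_concat h₂ q₂

lemma cycle_cons_decomp' {G : SimpleGraph V} {a : V} (c : G.Walk a a) (hc : c.IsCycle) :
    ∃ (x : V) (h : G.Adj a x) (q : G.Walk x a),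
      c = Walk.cons h q ∧ q.IsPath ∧ s(a, x) ∉ q.edges := by
  cases c with
  | nil => exact absurd rfl hc.ne_nil
  | cons h q =>
    obtain ⟨hq, he⟩ := (Walk.cons_isCycle_iff q h).mp hc
    exact ⟨_, h, q, rfl, hq, he⟩

lemma walk_concat_decomp' {G : SimpleGraph V} {a b : V} (q : G.Walk a b) (hne : a ≠ b) :
    ∃ (z : V) (q' : G.Walk a z) (h' : G.Adj z b), q = q'.concat h' := by
  cases q with
  | nil => exact absurd rfl hne
  | cons h₂ q₂ => exact Walk.exists_cons_eq_concat h₂ q₂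

lemma cycle_decomp {G : SimpleGraph V} {a b : V} {c : G.Walk a a} (hc : c.IsCycle)
    (he : s(a, b) ∈ c.edges) :
    ∃ p : G.Walk a b, p.IsPath ∧ s(a, b) ∉ p.edges ∧ ∀ e ∈ p.edges, e ∈ c.edges := by
  have hab : a ≠ b := (c.adj_of_mem_edges he).ne
  obtain ⟨x, h, q, rfl, hqp, hax⟩ := cycle_cons_decomp' c hc
  rw [Walk.edges_cons, List.mem_cons] at he
  rcases he with he1 | he2
  · have hbx : b = x := by
      rcases Sym2.eq_iff.mp he1 with ⟨-, h2⟩ | ⟨h1, h2⟩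
      · exact h2
      · exact absurd h2 hab.symm
    subst hbx
    refine ⟨q.reverse, hqp.reverse, ?_, ?_⟩
    · rw [Walk.edges_reverse, List.mem_reverse, he1]; exact hax
    · intro e hee
      rw [Walk.edges_reverse, List.mem_reverse] at hee
      rw [Walk.edges_cons]
      exact List.mem_cons_of_mem _ hee
  · have hne1 : s(a, b) ≠ s(a, x) := fun hh => hax (hh ▸ he2)
    have hxa : x ≠ a := h.ne'
    obtain ⟨z, q', h', rfl⟩ := walk_concat_decomp' q hxa
    have hsup : (q'.concat h').support.Nodup := hqp.support_nodup
    rw [Walk.support_concat, List.nodup_append] at hsup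
    have haq' : a ∉ q'.support := fun hh => hsup.2.2 _ hh _ (List.mem_singleton_self a) rfl
    have hq'p : q'.IsPath := Walk.isPath_def _ |>.mpr hsup.1
    rw [Walk.edges_concat, List.concat_eq_append, List.mem_append] at he2
    rcases he2 with hin | heq
    · exact absurd (q'.fst_mem_support_of_mem_edges hin) haq'
    · rw [List.mem_singleton] at heq
      have hbz : b = z := by
        rcases Sym2.eq_iff.mp heq with ⟨h1, h2⟩ | ⟨h1, h2⟩
        · exact absurd h2 hab.symm
        · exact h2
      subst hbz
      have hnd : (q'.concat h').edges.Nodup := hqp.isTrail.edges_nodup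
      rw [Walk.edges_concat, List.concat_eq_append, List.nodup_append] at hnd
      refine ⟨Walk.cons h q', ?_, ?_, ?_⟩
      · rw [Walk.cons_isPath_iff]; exact ⟨hq'p, haq'⟩
      · rw [Walk.edges_cons, List.mem_cons]
        rintro (h1 | h2)
        · exact hne1 h1
        · exact hnd.2.2 _ (heq ▸ h2) _ (List.mem_singleton_self _) rfl
      · intro e hee
        rw [Walk.edges_cons, List.mem_cons] at hee ⊢
        rcases hee with rfl | hee
        · exact Or.inl rfl
        · exact Or.inr (by rw [Walk.edges_concat, List.concat_eq_append, List.mem_append]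
                           exact Or.inl hee)

section Surgery
variable [DecidableEq V] {G G' : SimpleGraph V} {v u w : V}

lemma surg1
    (huw : u ≠ w) (hadj : ¬ G.Adj u w)
    (hnb : ∀ x, G.Adj v x ↔ x = u ∨ x = w)
    (hG' : ∀ a b, G'.Adj a b ↔ (G.Adj a b ∧ a ≠ v ∧ b ≠ v) ∨ s(a, b) = s(u, w))
    {r : V} (c : G'.Walk r r) (hc : c.IsCycle) :
    ∃ (r' : V) (c' : G.Walk r' r'), c'.IsCycle ∧
      ∀ x ∈ c'.support, (x ∈ c.support ∧ x ≠ v) ∨ (x = v ∧ u ∈ c.support) := by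
  have hvu : G.Adj v u := (hnb u).mpr (Or.inl rfl)
  have hvw : G.Adj v w := (hnb w).mpr (Or.inr rfl)
  have hG'vy : ∀ y, ¬ G'.Adj v y := by
    intro y hy
    rcases (hG' v y).mp hy with ⟨-, hne, -⟩ | heq
    · exact hne rfl
    · rcases Sym2.eq_iff.mp heq with ⟨h1, -⟩ | ⟨h1, -⟩
      · exact hvu.ne h1
      · exact hvw.ne h1
  by_cases he : s(u, w) ∈ c.edges
  · have hu : u ∈ c.support := c.fst_mem_support_of_mem_edges he
    have hw : w ∈ c.support := c.snd_mem_support_of_mem_edges he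
    have hc₁ : (c.rotate u hu).IsCycle := hc.rotate hu
    have he₁ : s(u, w) ∈ (c.rotate u hu).edges := (Walk.rotate_edges c u hu).mem_iff.mpr he
    obtain ⟨p, hp, hpe, hpsub⟩ := cycle_decomp hc₁ he₁
    have hpv : v ∉ p.support := by
      intro hv
      rcases mem_support_start_or_edge p hv with h1 | ⟨e, hep, hve⟩
      · exact hvu.ne h1
      · induction e using Sym2.ind with
        | _ y z =>
          have hyz : G'.Adj y z := p.adj_of_mem_edges hep
          rcases Sym2.mem_iff.mp hve with rfl | rfl
          · exact hG'vy _ hyz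
          · exact hG'vy _ hyz.symm
    have hedges : ∀ e ∈ p.edges, e ∈ G.edgeSet := by
      intro e hep
      induction e using Sym2.ind with
      | _ y z =>
        have hyz : G'.Adj y z := p.adj_of_mem_edges hep
        rcases (hG' y z).mp hyz with ⟨hadj', -, -⟩ | heq
        · exact hadj'
        · exact absurd hep (heq ▸ hpe)
    set pG := p.transfer G hedges with hpGdef
    have hpG : pG.IsPath := hp.transfer _
    have hvs : v ∉ pG.support := by rw [hpGdef, Walk.support_transfer]; exact hpv
    refine ⟨w, Walk.cons hvw.symm (Walk.cons hvu pG), ?_, ?_⟩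
    · rw [Walk.cons_isCycle_iff]
      constructor
      · rw [Walk.cons_isPath_iff]; exact ⟨hpG, hvs⟩
      · rw [Walk.edges_cons, List.mem_cons]
        rintro (h1 | h2)
        · rcases Sym2.eq_iff.mp h1 with ⟨h3, -⟩ | ⟨h3, -⟩
          · exact hvw.ne h3.symm
          · exact huw h3.symm
        · exact hvs (mem_support_of_mem_edges' pG h2 (by simp))
    · intro x hx
      rw [Walk.support_cons, List.mem_cons, Walk.support_cons, List.mem_cons] at hx
      rcases hx with rfl | rfl | hx
      · exact Or.inl ⟨hw, hvw.ne'⟩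
      · exact Or.inr ⟨rfl, hu⟩
      · left
        refine ⟨?_, fun hh => hvs (hh ▸ hx)⟩
        rw [hpGdef, Walk.support_transfer] at hx
        rcases mem_support_start_or_edge p hx with rfl | ⟨e, hep, hxe⟩
        · exact hu
        · exact mem_support_rotate hu
            (mem_support_of_mem_edges' (c.rotate u hu) (hpsub e hep) hxe)
  · have hedges : ∀ e ∈ c.edges, e ∈ G.edgeSet := by
      intro e hep
      induction e using Sym2.ind with
      | _ y z =>
        have hyz : G'.Adj y z := c.adj_of_mem_edges hep
        rcases (hG' y z).mp hyz with ⟨hadj', -, -⟩ | heq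
        · exact hadj'
        · exact absurd hep (heq ▸ he)
    refine ⟨r, c.transfer G hedges, hc.transfer _, ?_⟩
    intro x hx
    rw [Walk.support_transfer] at hx
    refine Or.inl ⟨hx, fun hh => ?_⟩
    exact not_mem_cycle_support_of_isolated hc hG'vy (hh ▸ hx)

lemma surg2
    (huw : u ≠ w) (hadj : ¬ G.Adj u w)
    (hnb : ∀ x, G.Adj v x ↔ x = u ∨ x = w)
    (hG' : ∀ a b, G'.Adj a b ↔ (G.Adj a b ∧ a ≠ v ∧ b ≠ v) ∨ s(a, b) = s(u, w))
    {r : V} (c : G.Walk r r) (hc : c.IsCycle) :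
    ∃ (r' : V) (c' : G'.Walk r' r'), c'.IsCycle ∧
      ∀ x ∈ c'.support, x ∈ c.support ∧ x ≠ v := by
  by_cases hv : v ∈ c.support
  · have hc₁ : (c.rotate v hv).IsCycle := hc.rotate hv
    obtain ⟨x, h, q, hceq, hqp, hax⟩ := cycle_cons_decomp' (c.rotate v hv) hc₁
    have hxv : x ≠ v := h.ne'
    obtain ⟨z, q', h', rfl⟩ := walk_concat_decomp' q hxv
    have hzv : z ≠ v := h'.ne
    have hx : x = u ∨ x = w := (hnb x).mp h
    have hz : z = u ∨ z = w := (hnb z).mp h'.symm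
    have hzx : z ≠ x := by
      rintro rfl
      apply hax
      rw [Walk.edges_concat, List.concat_eq_append, List.mem_append, List.mem_singleton]
      exact Or.inr (Sym2.eq_swap)
    have hsup : (q'.concat h').support.Nodup := hqp.support_nodup
    rw [Walk.support_concat, List.nodup_append] at hsup
    have hvq' : v ∉ q'.support := fun hh => hsup.2.2 _ hh _ (List.mem_singleton_self v) rfl
    have hq'p : q'.IsPath := Walk.isPath_def _ |>.mpr hsup.1
    have hedges : ∀ e ∈ q'.edges, e ∈ G'.edgeSet := by
      intro e hep
      induction e using Sym2.ind with
      | _ y₁ y₂ =>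
        have hy : G.Adj y₁ y₂ := q'.adj_of_mem_edges hep
        rw [SimpleGraph.mem_edgeSet]
        refine (hG' y₁ y₂).mpr (Or.inl ⟨hy, ?_, ?_⟩)
        · rintro rfl; exact hvq' (q'.fst_mem_support_of_mem_edges hep)
        · rintro rfl; exact hvq' (q'.snd_mem_support_of_mem_edges hep)
    set q'' := q'.transfer G' hedges with hq''def
    have hsym : s(z, x) = s(u, w) := by
      rcases hx with rfl | rfl <;> rcases hz with rfl | rfl
      · exact absurd rfl hzx
      · exact Sym2.eq_swap
      · rfl
      · exact absurd rfl hzx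
    have hadjzx : G'.Adj z x := (hG' z x).mpr (Or.inr hsym)
    have hq'mem : ∀ y ∈ q'.support, y ∈ c.support := by
      intro y hy
      apply mem_support_rotate hv
      rw [hceq, Walk.support_cons, List.mem_cons]
      refine Or.inr ?_
      rw [Walk.support_concat, List.mem_append]
      exact Or.inl hy
    refine ⟨z, Walk.cons hadjzx q'', ?_, ?_⟩
    · rw [Walk.cons_isCycle_iff]
      refine ⟨hq'p.transfer _, ?_⟩
      rw [hq''def, Walk.edges_transfer]
      intro hmem
      have : G.Adj z x := q'.adj_of_mem_edges hmem
      rcases hx with rfl | rfl <;> rcases hz with rfl | rfl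
      · exact hzx rfl
      · exact hadj this.symm
      · exact hadj this
      · exact hzx rfl
    · intro y hy
      rw [Walk.support_cons, List.mem_cons] at hy
      rcases hy with rfl | hy
      · exact ⟨hq'mem y q'.end_mem_support, hzv⟩
      · rw [hq''def, Walk.support_transfer] at hy
        exact ⟨hq'mem y hy, fun hh => hvq' (hh ▸ hy)⟩
  · have hedges : ∀ e ∈ c.edges, e ∈ G'.edgeSet := by
      intro e hep
      induction e using Sym2.ind with
      | _ y₁ y₂ =>
        have hy : G.Adj y₁ y₂ := c.adj_of_mem_edges hep
        rw [SimpleGraph.mem_edgeSet]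
        refine (hG' y₁ y₂).mpr (Or.inl ⟨hy, ?_, ?_⟩)
        · rintro rfl; exact hv (c.fst_mem_support_of_mem_edges hep)
        · rintro rfl; exact hv (c.snd_mem_support_of_mem_edges hep)
    refine ⟨r, c.transfer G' hedges, hc.transfer _, ?_⟩
    intro y hy
    rw [Walk.support_transfer] at hy
    exact ⟨hy, fun hh => hv (hh ▸ hy)⟩

end Surgery

end FVSsup

open FVSsup in
/-- Suppressing a degree-2 vertex preserves the minimum feedback vertex set size:
if the neighborhood of `v` in a finite simple graph `G` is exactly `{u, w}` with
`u ≠ w` and `u` not adjacent to `w`, and `G'` is the graph on the same vertex set whose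
edges are the edges of `G` not incident to `v` together with the new edge `{u, w}`,
then the minimum cardinality of a feedback vertex set of `G'` equals the minimum
cardinality of a feedback vertex set of `G`. -/
theorem min_fvs_card_suppress_degree_two_vertex
    {V : Type*} [Fintype V] [DecidableEq V]
    (G : SimpleGraph V)
    (v u w : V) (huw : u ≠ w) (hadj : ¬ G.Adj u w)
    (hnbhd : G.neighborSet v = {u, w}) :
    sInf {n : ℕ | ∃ S : Finset V,
        ((SimpleGraph.fromEdgeSet ({e ∈ G.edgeSet | v ∉ e} ∪ {s(u, w)})).induce
          ((↑S : Set V)ᶜ)).IsAcyclic ∧ S.card = n} =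
      sInf {n : ℕ | ∃ S : Finset V, (G.induce ((↑S : Set V)ᶜ)).IsAcyclic ∧ S.card = n} := by
  classical
  set G' := SimpleGraph.fromEdgeSet ({e ∈ G.edgeSet | v ∉ e} ∪ {s(u, w)}) with hG'def
  have hnb : ∀ x, G.Adj v x ↔ x = u ∨ x = w := by
    intro x
    rw [← SimpleGraph.mem_neighborSet, hnbhd]
    simp [Set.mem_insert_iff]
  have hvu : G.Adj v u := (hnb u).mpr (Or.inl rfl)
  have hvw : G.Adj v w := (hnb w).mpr (Or.inr rfl)
  have hG' : ∀ a b, G'.Adj a b ↔ (G.Adj a b ∧ a ≠ v ∧ b ≠ v) ∨ s(a, b) = s(u, w) := by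
    intro a b
    rw [hG'def, SimpleGraph.fromEdgeSet_adj, Set.mem_union, Set.mem_setOf_eq,
      Set.mem_singleton_iff]
    constructor
    · rintro ⟨h1 | h2, hne⟩
      · refine Or.inl ⟨(SimpleGraph.mem_edgeSet G).mp h1.1, ?_, ?_⟩
        · rintro rfl; exact h1.2 (by simp)
        · rintro rfl; exact h1.2 (by simp)
      · exact Or.inr h2
    · rintro (⟨hAdj, ha, hb⟩ | heq)
      · refine ⟨Or.inl ⟨(SimpleGraph.mem_edgeSet G).mpr hAdj, ?_⟩, hAdj.ne⟩
        rw [Sym2.mem_iff]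
        rintro (h | h)
        · exact ha h.symm
        · exact hb h.symm
      · refine ⟨Or.inr heq, ?_⟩
        rcases Sym2.eq_iff.mp heq with ⟨rfl, rfl⟩ | ⟨rfl, rfl⟩
        · exact huw
        · exact huw.symm
  have hits_iff : ∀ (K : SimpleGraph V) (S : Finset V),
      (K.induce ((↑S : Set V)ᶜ)).IsAcyclic ↔
        ∀ (a : V) (c : K.Walk a a), c.IsCycle → ∃ x ∈ c.support, x ∈ S := by
    intro K S
    rw [induce_isAcyclic_iff]
    simp only [Set.mem_compl_iff, Finset.mem_coe, not_not]
  have key1 : ∀ S : Finset V, (G.induce ((↑S : Set V)ᶜ)).IsAcyclic →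
      ∃ T : Finset V, (G'.induce ((↑T : Set V)ᶜ)).IsAcyclic ∧ T.card ≤ S.card := by
    intro S hS
    rw [hits_iff] at hS
    by_cases hvS : v ∈ S
    · refine ⟨insert u (S.erase v), ?_, ?_⟩
      · rw [hits_iff]
        intro a c hcyc
        obtain ⟨r', c', hc', hsup⟩ := surg1 huw hadj hnb hG' c hcyc
        obtain ⟨x, hxs, hxS⟩ := hS r' c' hc'
        rcases hsup x hxs with ⟨hxc, hxv⟩ | ⟨rfl, huc⟩
        · exact ⟨x, hxc, Finset.mem_insert_of_mem (Finset.mem_erase.mpr ⟨hxv, hxS⟩)⟩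
        · exact ⟨u, huc, Finset.mem_insert_self _ _⟩
      · calc (insert u (S.erase v)).card ≤ (S.erase v).card + 1 := Finset.card_insert_le _ _
          _ = S.card := Finset.card_erase_add_one hvS
    · refine ⟨S, ?_, le_rfl⟩
      rw [hits_iff]
      intro a c hcyc
      obtain ⟨r', c', hc', hsup⟩ := surg1 huw hadj hnb hG' c hcyc
      obtain ⟨x, hxs, hxS⟩ := hS r' c' hc'
      rcases hsup x hxs with ⟨hxc, hxv⟩ | ⟨rfl, huc⟩
      · exact ⟨x, hxc, hxS⟩
      · exact absurd hxS hvS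
  have key2 : ∀ T : Finset V, (G'.induce ((↑T : Set V)ᶜ)).IsAcyclic →
      ∃ S : Finset V, (G.induce ((↑S : Set V)ᶜ)).IsAcyclic ∧ S.card ≤ T.card := by
    intro T hT
    rw [hits_iff] at hT
    refine ⟨T.erase v, ?_, Finset.card_erase_le⟩
    rw [hits_iff]
    intro a c hcyc
    obtain ⟨r', c', hc', hsup⟩ := surg2 huw hadj hnb hG' c hcyc
    obtain ⟨x, hxs, hxT⟩ := hT r' c' hc'
    obtain ⟨hxc, hxv⟩ := hsup x hxs
    exact ⟨x, hxc, Finset.mem_erase.mpr ⟨hxv, hxT⟩⟩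
  have hne : ∀ K : SimpleGraph V,
      {n : ℕ | ∃ S : Finset V, (K.induce ((↑S : Set V)ᶜ)).IsAcyclic ∧ S.card = n}.Nonempty := by
    intro K
    exact ⟨Finset.univ.card, Finset.univ, fun x => absurd x.2 (by simp), rfl⟩
  apply le_antisymm
  · obtain ⟨S, hS, hcard⟩ := Nat.sInf_mem (hne G)
    obtain ⟨T, hT, hle⟩ := key1 S hS
    have hmem : T.card ∈ {n : ℕ | ∃ S : Finset V,
        (G'.induce ((↑S : Set V)ᶜ)).IsAcyclic ∧ S.card = n} := ⟨T, hT, rfl⟩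
    exact (Nat.sInf_le hmem).trans (hle.trans_eq hcard)
  · obtain ⟨T, hT, hcard⟩ := Nat.sInf_mem (hne G')
    obtain ⟨S, hS, hle⟩ := key2 T hT
    have hmem : S.card ∈ {n : ℕ | ∃ S : Finset V,
        (G.induce ((↑S : Set V)ᶜ)).IsAcyclic ∧ S.card = n} := ⟨S, hS, rfl⟩
    exact (Nat.sInf_le hmem).trans (hle.trans_eq hcard)
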